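/- arXiv:2006.00242 — 11 statements merged into one kernel-verified Lean document; each statement's English description precedes it below -/
import Mathlib

section
/- For every (s,u) ∈ ℝ × ℝ, the cross product of the partial derivatives of the GNR-surface F satisfies ∂F/∂s(s,u) × ∂F/∂u(s,u) = (u·f(s)) • T(s) − (a₂(s)·g(s,u)) • N(s) + (a₁(s)·g(s,u)) • B(s). -/
open Matrix
open scoped Matrix

lemma triple_cross (a b c : Fin 3 → ℝ) :
    a ⨯₃ (b ⨯₃ c) = (a ⬝ᵥ c) • b - (a ⬝ᵥ b) • c := by
  ext i
  fin_cases i <;>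
    simp [cross_apply, dotProduct, Fin.sum_univ_three] <;> ring

theorem stmt_0
    (α T N B : ℝ → Fin 3 → ℝ) (κ τ a₁ a₂ : ℝ → ℝ)
    (hαs : ContDiff ℝ (⊤ : ℕ∞) α) (hTs : ContDiff ℝ (⊤ : ℕ∞) T) (hNs : ContDiff ℝ (⊤ : ℕ∞) N)
    (hBs : ContDiff ℝ (⊤ : ℕ∞) B) (hκs : ContDiff ℝ (⊤ : ℕ∞) κ) (hτs : ContDiff ℝ (⊤ : ℕ∞) τ)
    (ha₁s : ContDiff ℝ (⊤ : ℕ∞) a₁) (ha₂s : ContDiff ℝ (⊤ : ℕ∞) a₂)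
    (hαT : ∀ s, T s = deriv α s)
    (hTT : ∀ s, T s ⬝ᵥ T s = 1) (hNN : ∀ s, N s ⬝ᵥ N s = 1) (hBB : ∀ s, B s ⬝ᵥ B s = 1)
    (hTN : ∀ s, T s ⬝ᵥ N s = 0) (hTB : ∀ s, T s ⬝ᵥ B s = 0) (hNB : ∀ s, N s ⬝ᵥ B s = 0)
    (hBTN : ∀ s, B s = T s ⨯₃ N s)
    (hT' : ∀ s, deriv T s = κ s • N s)
    (hN' : ∀ s, deriv N s = (-κ s) • T s + τ s • B s)
    (hB' : ∀ s, deriv B s = (-τ s) • N s)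
    (hcircle : ∀ s, a₁ s ^ 2 + a₂ s ^ 2 = 1)
    (q_n : ℝ → Fin 3 → ℝ) (hq : ∀ s, q_n s = a₁ s • N s + a₂ s • B s)
    (F : ℝ → ℝ → Fin 3 → ℝ) (hF : ∀ s u, F s u = α s + u • q_n s)
    (f : ℝ → ℝ) (hf : ∀ s, f s = deriv a₁ s * a₂ s - a₁ s * deriv a₂ s - τ s)
    (g : ℝ → ℝ → ℝ) (hg : ∀ s u, g s u = 1 - u * a₁ s * κ s) :
    ∀ s u, deriv (fun t => F t u) s ⨯₃ deriv (F s) u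
      = (u * f s) • T s - (a₂ s * g s u) • N s + (a₁ s * g s u) • B s := by
  intro s u
  -- derivative in u
  have hdu : deriv (F s) u = q_n s := by
    have : (F s) = fun v => α s + v • q_n s := funext fun v => hF s v
    rw [this]
    have h : HasDerivAt (fun v : ℝ => α s + v • q_n s) ((1:ℝ) • q_n s) u :=
      ((hasDerivAt_id u).smul_const (q_n s)).const_add (α s)
    simpa using h.deriv
  -- derivative in s
  have hN1 : HasDerivAt N (deriv N s) s := (hNs.differentiable (by simp) s).hasDerivAt
  have hB1 : HasDerivAt B (deriv B s) s := (hBs.differentiable (by simp) s).hasDerivAt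
  have ha1 : HasDerivAt a₁ (deriv a₁ s) s := (ha₁s.differentiable (by simp) s).hasDerivAt
  have ha2 : HasDerivAt a₂ (deriv a₂ s) s := (ha₂s.differentiable (by simp) s).hasDerivAt
  have hα1 : HasDerivAt α (T s) s := by
    rw [hαT s]; exact (hαs.differentiable (by simp) s).hasDerivAt
  have hqd : HasDerivAt q_n
      (deriv a₁ s • N s + a₁ s • deriv N s + (deriv a₂ s • B s + a₂ s • deriv B s)) s := by
    have : q_n = fun t => a₁ t • N t + a₂ t • B t := funext hq
    rw [this]
    have h1 : HasDerivAt (fun t => a₁ t • N t) (a₁ s • deriv N s + deriv a₁ s • N s) s :=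
      ha1.smul hN1
    have h2 : HasDerivAt (fun t => a₂ t • B t) (a₂ s • deriv B s + deriv a₂ s • B s) s :=
      ha2.smul hB1
    have : HasDerivAt (fun t => a₁ t • N t + a₂ t • B t) _ s := h1.add h2
    convert this using 1
    abel
  have hds : deriv (fun t => F t u) s
      = T s + u • (deriv a₁ s • N s + a₁ s • deriv N s
          + (deriv a₂ s • B s + a₂ s • deriv B s)) := by
    have : (fun t => F t u) = fun t => α t + u • q_n t := funext fun t => hF t u
    rw [this]
    exact (hα1.add (hqd.const_smul u)).deriv
  rw [hdu, hds, hq s, hN' s, hB' s]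
  -- cross product identities
  have hNxB : N s ⨯₃ B s = T s := by
    rw [hBTN s, triple_cross, hNN s, dotProduct_comm, hTN s]
    simp
  have hTxB : T s ⨯₃ B s = -N s := by
    rw [hBTN s, triple_cross, hTN s, hTT s]
    simp
  have hNxN : N s ⨯₃ N s = 0 := cross_self _
  have hBxB : B s ⨯₃ B s = 0 := cross_self _
  have hTxN : T s ⨯₃ N s = B s := (hBTN s).symm
  have hBxN : B s ⨯₃ N s = -(T s) := by
    have h := cross_anticomm (B s) (N s)
    exact neg_eq_iff_eq_neg.mp (h.trans hNxB)
  -- expand bilinearity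
  simp only [smul_add, smul_smul, add_smul, neg_smul]
  simp only [LinearMap.map_add, LinearMap.map_smul, LinearMap.map_neg, LinearMap.add_apply,
    LinearMap.smul_apply, LinearMap.neg_apply, map_add, _root_.map_smul, map_neg]
  rw [show (crossProduct (T s)) (N s) = B s from hTxN,
      show (crossProduct (T s)) (B s) = -N s from hTxB,
      show (crossProduct (N s)) (B s) = T s from hNxB,
      show (crossProduct (N s)) (N s) = 0 from hNxN,
      show (crossProduct (B s)) (B s) = 0 from hBxB,
      show (crossProduct (B s)) (N s) = -(T s) from hBxN]
  rw [hf s, hg s u]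
  match_scalars
  all_goals
    first
      | ring1
      | linear_combination (u * τ s) * hcircle s
      | linear_combination (-(u * τ s)) * hcircle s
end

section
/- For every s, the scalar triple product satisfies ⟨deriv α s, q_n(s) × deriv q_n s⟩ = −f(s). Consequently the GNR-surface F is developable (the triple product det(α′, q_n, q_n′) vanishes identically) if and only if f(s) = 0 for all s. -/
open Matrix
open scoped Matrix

private lemma bac_cab (u v w : Fin 3 → ℝ) :
    u ⨯₃ (v ⨯₃ w) = (u ⬝ᵥ w) • v - (u ⬝ᵥ v) • w := by
  ext i
  fin_cases i <;>
    simp [cross_apply, dotProduct, Fin.sum_univ_three] <;> ring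

theorem stmt_4
    (α T N B : ℝ → Fin 3 → ℝ) (κ τ a₁ a₂ : ℝ → ℝ)
    (hαs : ContDiff ℝ (⊤ : ℕ∞) α) (hTs : ContDiff ℝ (⊤ : ℕ∞) T) (hNs : ContDiff ℝ (⊤ : ℕ∞) N)
    (hBs : ContDiff ℝ (⊤ : ℕ∞) B) (hκs : ContDiff ℝ (⊤ : ℕ∞) κ) (hτs : ContDiff ℝ (⊤ : ℕ∞) τ)
    (ha₁s : ContDiff ℝ (⊤ : ℕ∞) a₁) (ha₂s : ContDiff ℝ (⊤ : ℕ∞) a₂)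
    (hαT : ∀ s, T s = deriv α s)
    (hTT : ∀ s, T s ⬝ᵥ T s = 1) (hNN : ∀ s, N s ⬝ᵥ N s = 1) (hBB : ∀ s, B s ⬝ᵥ B s = 1)
    (hTN : ∀ s, T s ⬝ᵥ N s = 0) (hTB : ∀ s, T s ⬝ᵥ B s = 0) (hNB : ∀ s, N s ⬝ᵥ B s = 0)
    (hBTN : ∀ s, B s = T s ⨯₃ N s)
    (hT' : ∀ s, deriv T s = κ s • N s)
    (hN' : ∀ s, deriv N s = (-κ s) • T s + τ s • B s)
    (hB' : ∀ s, deriv B s = (-τ s) • N s)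
    (hcircle : ∀ s, a₁ s ^ 2 + a₂ s ^ 2 = 1)
    (q_n : ℝ → Fin 3 → ℝ) (hq : ∀ s, q_n s = a₁ s • N s + a₂ s • B s)
    (F : ℝ → ℝ → Fin 3 → ℝ) (hF : ∀ s u, F s u = α s + u • q_n s)
    (f : ℝ → ℝ) (hf : ∀ s, f s = deriv a₁ s * a₂ s - a₁ s * deriv a₂ s - τ s) :
    (∀ s, deriv α s ⬝ᵥ (q_n s ⨯₃ deriv q_n s) = -f s)
      ∧ ((∀ s, deriv α s ⬝ᵥ (q_n s ⨯₃ deriv q_n s) = 0) ↔ (∀ s, f s = 0)) := by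
  have key : ∀ s, deriv α s ⬝ᵥ (q_n s ⨯₃ deriv q_n s) = -f s := by
    intro s
    -- derivative of q_n
    have h1 : HasDerivAt a₁ (deriv a₁ s) s :=
      ((ha₁s.differentiable (by simp)) s).hasDerivAt
    have h2 : HasDerivAt N (deriv N s) s :=
      ((hNs.differentiable (by simp)) s).hasDerivAt
    have h3 : HasDerivAt a₂ (deriv a₂ s) s :=
      ((ha₂s.differentiable (by simp)) s).hasDerivAt
    have h4 : HasDerivAt B (deriv B s) s :=
      ((hBs.differentiable (by simp)) s).hasDerivAt
    have hqd : deriv q_n s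
        = (a₁ s • deriv N s + deriv a₁ s • N s) + (a₂ s • deriv B s + deriv a₂ s • B s) := by
      have hq_fun : q_n = fun t => a₁ t • N t + a₂ t • B t := funext hq
      have : HasDerivAt q_n
          ((a₁ s • deriv N s + deriv a₁ s • N s) + (a₂ s • deriv B s + deriv a₂ s • B s)) s := by
        rw [hq_fun]
        exact (h1.smul h2).add (h3.smul h4)
      exact this.deriv
    -- cross product facts
    have hNxB : N s ⨯₃ B s = T s := by
      rw [hBTN, bac_cab, hNN, dotProduct_comm, hTN]
      simp
    have hBxT : B s ⨯₃ T s = N s := by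
      have : T s ⨯₃ B s = -N s := by
        rw [hBTN, bac_cab, hTT, hTN]
        simp
      rw [← cross_anticomm, this, neg_neg]
    have hNxT : N s ⨯₃ T s = -B s := by
      rw [← cross_anticomm, ← hBTN]
    have hBxN : B s ⨯₃ N s = -T s := by
      rw [← cross_anticomm, hNxB]
    rw [← hαT, hq, hqd, hN' s, hB' s, hf]
    simp only [map_add, _root_.map_smul, LinearMap.map_smul₂, map_neg, LinearMap.add_apply, LinearMap.smul_apply,
      LinearMap.neg_apply, cross_self, smul_smul, smul_zero, smul_add, smul_neg,
      hNxB, hBxT, hNxT, hBxN,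
      dotProduct_add, dotProduct_smul, dotProduct_neg, dotProduct_zero, smul_eq_mul,
      hTT s, hTN s, hTB s]
    linear_combination (τ s) * hcircle s
  refine ⟨key, ?_⟩
  constructor
  · intro h s
    have := key s
    rw [h s] at this
    linarith
  · intro h s
    rw [key s, h s, neg_zero]
end

section
/- For every s, U_α(s) × (deriv (deriv α)) s = −(a₁(s)κ(s)) • T(s). Consequently the base curve α is a geodesic of the GNR-surface F (i.e. U_α × α″ vanishes identically) if and only if a₁(s)·κ(s) = 0 for all s. -/
open Matrix
open scoped Matrix

lemma cross_triple_aux (u v : Fin 3 → ℝ) (h1 : u ⬝ᵥ u = 1) (h2 : u ⬝ᵥ v = 0) :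
    u ⨯₃ (v ⨯₃ u) = v := by
  simp only [dotProduct, Fin.sum_univ_three] at h1 h2
  funext i
  fin_cases i
  · simp [cross_apply]; linear_combination v 0 * h1 - u 0 * h2
  · simp [cross_apply]; linear_combination v 1 * h1 - u 1 * h2
  · simp [cross_apply]; linear_combination v 2 * h1 - u 2 * h2

theorem stmt_5
    (α T N B : ℝ → Fin 3 → ℝ) (κ τ a₁ a₂ : ℝ → ℝ)
    (hαs : ContDiff ℝ (⊤ : ℕ∞) α) (hTs : ContDiff ℝ (⊤ : ℕ∞) T) (hNs : ContDiff ℝ (⊤ : ℕ∞) N)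
    (hBs : ContDiff ℝ (⊤ : ℕ∞) B) (hκs : ContDiff ℝ (⊤ : ℕ∞) κ) (hτs : ContDiff ℝ (⊤ : ℕ∞) τ)
    (ha₁s : ContDiff ℝ (⊤ : ℕ∞) a₁) (ha₂s : ContDiff ℝ (⊤ : ℕ∞) a₂)
    (hαT : ∀ s, T s = deriv α s)
    (hTT : ∀ s, T s ⬝ᵥ T s = 1) (hNN : ∀ s, N s ⬝ᵥ N s = 1) (hBB : ∀ s, B s ⬝ᵥ B s = 1)
    (hTN : ∀ s, T s ⬝ᵥ N s = 0) (hTB : ∀ s, T s ⬝ᵥ B s = 0) (hNB : ∀ s, N s ⬝ᵥ B s = 0)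
    (hBTN : ∀ s, B s = T s ⨯₃ N s)
    (hT' : ∀ s, deriv T s = κ s • N s)
    (hN' : ∀ s, deriv N s = (-κ s) • T s + τ s • B s)
    (hB' : ∀ s, deriv B s = (-τ s) • N s)
    (hcircle : ∀ s, a₁ s ^ 2 + a₂ s ^ 2 = 1)
    (q_n : ℝ → Fin 3 → ℝ) (hq : ∀ s, q_n s = a₁ s • N s + a₂ s • B s)
    (F : ℝ → ℝ → Fin 3 → ℝ) (hF : ∀ s u, F s u = α s + u • q_n s)
    (Uα : ℝ → Fin 3 → ℝ) (hUα : ∀ s, Uα s = (-a₂ s) • N s + a₁ s • B s) :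
    (∀ s, Uα s ⨯₃ deriv (deriv α) s = (-(a₁ s * κ s)) • T s)
      ∧ ((∀ s, Uα s ⨯₃ deriv (deriv α) s = 0) ↔ (∀ s, a₁ s * κ s = 0)) := by
  have hda : deriv α = T := funext fun s => (hαT s).symm
  have key : ∀ s, Uα s ⨯₃ deriv (deriv α) s = (-(a₁ s * κ s)) • T s := by
    intro s
    have h2 : deriv (deriv α) s = κ s • N s := by rw [hda, hT' s]
    have hBN : B s ⨯₃ N s = -T s := by
      rw [hBTN, ← cross_anticomm (N s) (T s ⨯₃ N s),
        cross_triple_aux (N s) (T s) (hNN s)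
          (by rw [dotProduct_comm]; exact hTN s)]
    rw [h2, hUα s]
    simp only [map_add, LinearMap.add_apply, LinearMap.map_smul,
      LinearMap.smul_apply, cross_self, hBN, smul_zero, smul_neg, smul_smul, zero_add]
    module
  refine ⟨key, ?_, ?_⟩
  · intro h s
    have := (key s).symm.trans (h s)
    rcases smul_eq_zero.mp this with h0 | h0
    · linarith [h0]
    · exfalso
      have : T s ⬝ᵥ T s = 0 := by rw [h0]; simp
      rw [hTT s] at this; norm_num at this
  · intro h s
    rw [key s, h s]; simp
end

section
/- For every s, deriv α s × deriv U_α s = −(a₁′(s) − a₂(s)τ(s)) • N(s) − (a₂′(s) + a₁(s)τ(s)) • B(s); consequently deriv α s × deriv U_α s = 0 if and only if a₁′(s) − a₂(s)τ(s) = 0 and a₂′(s) + a₁(s)τ(s) = 0. Thus the base curve α is a line of curvature of the GNR-surface F if and only if this system holds for all s. -/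
open Matrix
open scoped Matrix

lemma aux_triple (a b : Fin 3 → ℝ) : a ⨯₃ (a ⨯₃ b) = (a ⬝ᵥ b) • a - (a ⬝ᵥ a) • b := by
  simp [cross_apply, dotProduct, Fin.sum_univ_three]
  funext i; fin_cases i <;> simp <;> ring

lemma aux_cross_lin (T v w : Fin 3 → ℝ) (x y z : ℝ) :
    T ⨯₃ (x • T + (y • v + z • w)) = y • (T ⨯₃ v) + z • (T ⨯₃ w) := by
  simp [LinearMap.map_add, LinearMap.map_smul, cross_self]

theorem stmt_7
    (α T N B : ℝ → Fin 3 → ℝ) (κ τ a₁ a₂ : ℝ → ℝ)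
    (hαs : ContDiff ℝ (⊤ : ℕ∞) α) (hTs : ContDiff ℝ (⊤ : ℕ∞) T) (hNs : ContDiff ℝ (⊤ : ℕ∞) N)
    (hBs : ContDiff ℝ (⊤ : ℕ∞) B) (hκs : ContDiff ℝ (⊤ : ℕ∞) κ) (hτs : ContDiff ℝ (⊤ : ℕ∞) τ)
    (ha₁s : ContDiff ℝ (⊤ : ℕ∞) a₁) (ha₂s : ContDiff ℝ (⊤ : ℕ∞) a₂)
    (hαT : ∀ s, T s = deriv α s)
    (hTT : ∀ s, T s ⬝ᵥ T s = 1) (hNN : ∀ s, N s ⬝ᵥ N s = 1) (hBB : ∀ s, B s ⬝ᵥ B s = 1)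
    (hTN : ∀ s, T s ⬝ᵥ N s = 0) (hTB : ∀ s, T s ⬝ᵥ B s = 0) (hNB : ∀ s, N s ⬝ᵥ B s = 0)
    (hBTN : ∀ s, B s = T s ⨯₃ N s)
    (hT' : ∀ s, deriv T s = κ s • N s)
    (hN' : ∀ s, deriv N s = (-κ s) • T s + τ s • B s)
    (hB' : ∀ s, deriv B s = (-τ s) • N s)
    (hcircle : ∀ s, a₁ s ^ 2 + a₂ s ^ 2 = 1)
    (q_n : ℝ → Fin 3 → ℝ) (hq : ∀ s, q_n s = a₁ s • N s + a₂ s • B s)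
    (F : ℝ → ℝ → Fin 3 → ℝ) (hF : ∀ s u, F s u = α s + u • q_n s)
    (Uα : ℝ → Fin 3 → ℝ) (hUα : ∀ s, Uα s = (-a₂ s) • N s + a₁ s • B s) :
    (∀ s, deriv α s ⨯₃ deriv Uα s
        = -((deriv a₁ s - a₂ s * τ s) • N s) - (deriv a₂ s + a₁ s * τ s) • B s)
      ∧ (∀ s, (deriv α s ⨯₃ deriv Uα s = 0 ↔
          (deriv a₁ s - a₂ s * τ s = 0 ∧ deriv a₂ s + a₁ s * τ s = 0)))
      ∧ ((∀ s, deriv α s ⨯₃ deriv Uα s = 0) ↔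
          (∀ s, deriv a₁ s - a₂ s * τ s = 0 ∧ deriv a₂ s + a₁ s * τ s = 0)) := by
  have hda₁ : Differentiable ℝ a₁ := ha₁s.differentiable (by simp)
  have hda₂ : Differentiable ℝ a₂ := ha₂s.differentiable (by simp)
  have hdN : Differentiable ℝ N := hNs.differentiable (by simp)
  have hdB : Differentiable ℝ B := hBs.differentiable (by simp)
  -- derivative of Uα
  have hU' : ∀ s, deriv Uα s
      = (a₂ s * κ s) • T s + ((-(deriv a₂ s) - a₁ s * τ s) • N s
        + (deriv a₁ s - a₂ s * τ s) • B s) := by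
    intro s
    have hfun : Uα = fun s => (-a₂ s) • N s + a₁ s • B s := funext hUα
    rw [hfun, deriv_fun_add (f := fun y => (-a₂ y) • N y) (g := fun y => a₁ y • B y)
        (((hda₂.neg s)).smul (hdN s)) ((hda₁ s).smul (hdB s)),
      deriv_fun_smul (c := fun y => -a₂ y) (hda₂.neg s) (hdN s), deriv_fun_smul (hda₁ s) (hdB s)]
    rw [hN' s, hB' s]
    have : deriv (fun y => -a₂ y) s = -(deriv a₂ s) := by
      simpa using deriv_neg'' (f := a₂) (x := s)
    rw [this]
    funext i
    simp [Pi.add_apply, Pi.smul_apply, smul_eq_mul]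
    ring
  -- cross products of the frame
  have hTB' : ∀ s, T s ⨯₃ B s = -N s := by
    intro s
    rw [hBTN s, aux_triple, hTN s, hTT s]
    simp
  have key : ∀ s, deriv α s ⨯₃ deriv Uα s
      = -((deriv a₁ s - a₂ s * τ s) • N s) - (deriv a₂ s + a₁ s * τ s) • B s := by
    intro s
    rw [← hαT s, hU' s, aux_cross_lin, ← hBTN s, hTB' s]
    funext i
    simp [Pi.add_apply, Pi.smul_apply, Pi.neg_apply, Pi.sub_apply, smul_eq_mul]
    ring
  refine ⟨key, ?_, ?_⟩
  · intro s
    constructor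
    · intro h
      rw [key s] at h
      have hN0 : (-((deriv a₁ s - a₂ s * τ s) • N s)
          - (deriv a₂ s + a₁ s * τ s) • B s) ⬝ᵥ N s = 0 := by rw [h]; simp
      have hB0 : (-((deriv a₁ s - a₂ s * τ s) • N s)
          - (deriv a₂ s + a₁ s * τ s) • B s) ⬝ᵥ B s = 0 := by rw [h]; simp
      have hBN : B s ⬝ᵥ N s = 0 := by rw [dotProduct_comm]; exact hNB s
      rw [sub_dotProduct, neg_dotProduct, smul_dotProduct, smul_dotProduct,
        hNN s, hBN] at hN0
      rw [sub_dotProduct, neg_dotProduct, smul_dotProduct, smul_dotProduct,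
        hNB s, hBB s] at hB0
      simp at hN0 hB0
      constructor <;> linarith
    · rintro ⟨h1, h2⟩
      rw [key s, h1, h2]
      simp
  · constructor
    · intro h s
      have := key s
      rw [h s] at this
      have hN0 : (-((deriv a₁ s - a₂ s * τ s) • N s)
          - (deriv a₂ s + a₁ s * τ s) • B s) ⬝ᵥ N s = 0 := by rw [← this]; simp
      have hB0 : (-((deriv a₁ s - a₂ s * τ s) • N s)
          - (deriv a₂ s + a₁ s * τ s) • B s) ⬝ᵥ B s = 0 := by rw [← this]; simp
      have hBN : B s ⬝ᵥ N s = 0 := by rw [dotProduct_comm]; exact hNB s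
      rw [sub_dotProduct, neg_dotProduct, smul_dotProduct, smul_dotProduct,
        hNN s, hBN] at hN0
      rw [sub_dotProduct, neg_dotProduct, smul_dotProduct, smul_dotProduct,
        hNB s, hBB s] at hB0
      simp at hN0 hB0
      exact ⟨by linarith, by linarith⟩
    · intro h s
      rw [key s, (h s).1, (h s).2]
      simp
end

section
/- For every (s,u), the first fundamental coefficients of the GNR-surface F satisfy: ⟨∂F/∂s(s,u), ∂F/∂s(s,u)⟩ = g(s,u)² + u²·((a₁′(s) − a₂(s)τ(s))² + (a₁(s)τ(s) + a₂′(s))²), ⟨∂F/∂s(s,u), ∂F/∂u(s,u)⟩ = 0, and ⟨∂F/∂u(s,u), ∂F/∂u(s,u)⟩ = 1. -/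
open Matrix
open scoped Matrix

theorem stmt_8
    (α T N B : ℝ → Fin 3 → ℝ) (κ τ a₁ a₂ : ℝ → ℝ)
    (hαs : ContDiff ℝ (⊤ : ℕ∞) α) (hTs : ContDiff ℝ (⊤ : ℕ∞) T) (hNs : ContDiff ℝ (⊤ : ℕ∞) N)
    (hBs : ContDiff ℝ (⊤ : ℕ∞) B) (hκs : ContDiff ℝ (⊤ : ℕ∞) κ) (hτs : ContDiff ℝ (⊤ : ℕ∞) τ)
    (ha₁s : ContDiff ℝ (⊤ : ℕ∞) a₁) (ha₂s : ContDiff ℝ (⊤ : ℕ∞) a₂)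
    (hαT : ∀ s, T s = deriv α s)
    (hTT : ∀ s, T s ⬝ᵥ T s = 1) (hNN : ∀ s, N s ⬝ᵥ N s = 1) (hBB : ∀ s, B s ⬝ᵥ B s = 1)
    (hTN : ∀ s, T s ⬝ᵥ N s = 0) (hTB : ∀ s, T s ⬝ᵥ B s = 0) (hNB : ∀ s, N s ⬝ᵥ B s = 0)
    (hBTN : ∀ s, B s = T s ⨯₃ N s)
    (hT' : ∀ s, deriv T s = κ s • N s)
    (hN' : ∀ s, deriv N s = (-κ s) • T s + τ s • B s)
    (hB' : ∀ s, deriv B s = (-τ s) • N s)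
    (hcircle : ∀ s, a₁ s ^ 2 + a₂ s ^ 2 = 1)
    (q_n : ℝ → Fin 3 → ℝ) (hq : ∀ s, q_n s = a₁ s • N s + a₂ s • B s)
    (F : ℝ → ℝ → Fin 3 → ℝ) (hF : ∀ s u, F s u = α s + u • q_n s)
    (g : ℝ → ℝ → ℝ) (hg : ∀ s u, g s u = 1 - u * a₁ s * κ s) :
    ∀ s u,
      deriv (fun t => F t u) s ⬝ᵥ deriv (fun t => F t u) s
          = g s u ^ 2 + u ^ 2 * ((deriv a₁ s - a₂ s * τ s) ^ 2 + (a₁ s * τ s + deriv a₂ s) ^ 2)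
        ∧ deriv (fun t => F t u) s ⬝ᵥ deriv (F s) u = 0
        ∧ deriv (F s) u ⬝ᵥ deriv (F s) u = 1 := by
  intro s u
  have dα : Differentiable ℝ α := hαs.differentiable (by simp)
  have dN : Differentiable ℝ N := hNs.differentiable (by simp)
  have dB : Differentiable ℝ B := hBs.differentiable (by simp)
  have da₁ : Differentiable ℝ a₁ := ha₁s.differentiable (by simp)
  have da₂ : Differentiable ℝ a₂ := ha₂s.differentiable (by simp)
  -- derivative of circle condition
  have hcirc' : a₁ s * deriv a₁ s + a₂ s * deriv a₂ s = 0 := by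
    have h1 : (fun t => a₁ t ^ 2 + a₂ t ^ 2) = fun _ => (1 : ℝ) := funext hcircle
    have h2 : deriv (fun t => a₁ t ^ 2 + a₂ t ^ 2) s = 0 := by
      rw [h1]; simp
    have h3 : deriv (fun t => a₁ t ^ 2 + a₂ t ^ 2) s
        = 2 * a₁ s * deriv a₁ s + 2 * a₂ s * deriv a₂ s := by
      rw [deriv_fun_add (f := fun t => a₁ t ^ 2) (g := fun t => a₂ t ^ 2) ((da₁ s).pow 2) ((da₂ s).pow 2)]
      rw [deriv_fun_pow (da₁ s) 2, deriv_fun_pow (da₂ s) 2]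
      ring
    nlinarith [h2, h3]
  -- q_n as a function
  have hqfun : q_n = fun t => a₁ t • N t + a₂ t • B t := funext hq
  have dq : Differentiable ℝ q_n := by
    rw [hqfun]; exact (da₁.smul dN).add (da₂.smul dB)
  have hq' : deriv q_n s = (-(a₁ s * κ s)) • T s + (deriv a₁ s - a₂ s * τ s) • N s
      + (a₁ s * τ s + deriv a₂ s) • B s := by
    rw [hqfun]
    rw [deriv_fun_add (f := fun t => a₁ t • N t) (g := fun t => a₂ t • B t) ((da₁ s).smul (dN s)) ((da₂ s).smul (dB s))]
    rw [deriv_fun_smul (da₁ s) (dN s), deriv_fun_smul (da₂ s) (dB s)]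
    rw [hN' s, hB' s]
    module
  -- ∂F/∂s
  have hFs : deriv (fun t => F t u) s = T s + u • deriv q_n s := by
    have : (fun t => F t u) = fun t => α t + u • q_n t := by
      funext t; rw [hF]
    rw [this, deriv_fun_add (g := fun t => u • q_n t) (dα s) ((dq s).const_smul u), deriv_fun_const_smul u (dq s), hαT]
  have hFs2 : deriv (fun t => F t u) s = g s u • T s + (u * (deriv a₁ s - a₂ s * τ s)) • N s
      + (u * (a₁ s * τ s + deriv a₂ s)) • B s := by
    rw [hFs, hq', hg]
    module
  -- ∂F/∂u
  have hFu : deriv (F s) u = q_n s := by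
    have : F s = fun v => α s + v • q_n s := by funext v; rw [hF]
    rw [this, deriv_const_add]
    have : deriv (fun v : ℝ => v • q_n s) u = (1 : ℝ) • q_n s := by
      rw [deriv_smul_const differentiableAt_fun_id (q_n s)]
      simp
    rw [this, one_smul]
  have hNT : N s ⬝ᵥ T s = 0 := by rw [dotProduct_comm]; exact hTN s
  have hBT : B s ⬝ᵥ T s = 0 := by rw [dotProduct_comm]; exact hTB s
  have hBN : B s ⬝ᵥ N s = 0 := by rw [dotProduct_comm]; exact hNB s
  refine ⟨?_, ?_, ?_⟩
  · rw [hFs2]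
    simp only [add_dotProduct, dotProduct_add, smul_dotProduct, dotProduct_smul, smul_eq_mul,
      hTT s, hNN s, hBB s, hTN s, hTB s, hNB s, hNT, hBT, hBN]
    ring
  · rw [hFs2, hFu, hq s]
    simp only [add_dotProduct, dotProduct_add, smul_dotProduct, dotProduct_smul, smul_eq_mul,
      hTT s, hNN s, hBB s, hTN s, hTB s, hNB s, hNT, hBT, hBN]
    linear_combination u * hcirc'
  · rw [hFu, hq s]
    simp only [add_dotProduct, dotProduct_add, smul_dotProduct, dotProduct_smul, smul_eq_mul,
      hNN s, hBB s, hNB s, hBN]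
    linear_combination hcircle s
end

section
/- Let (s,u) be a regular point of the GNR-surface F, i.e. u²·f(s)² + g(s,u)² ≠ 0. Then the Gaussian curvature of F at (s,u) satisfies K = (L·N₂ − M²)/(E·G − F₁²) = −f(s)² / ((u²·f(s)² + g(s,u)²) · (g(s,u)² + u²·((a₁′(s) − a₂(s)τ(s))² + (a₁(s)τ(s) + a₂′(s))²))). In particular K = 0 at every regular point if and only if f ≡ 0, i.e. iff F is developable. -/
open Matrix
open scoped Matrix

lemma triple_combo' (T N B : Fin 3 → ℝ) (x₁ x₂ x₃ y₁ y₂ y₃ z₁ z₂ z₃ : ℝ) :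
    (x₁ • T + x₂ • N + x₃ • B) ⬝ᵥ ((y₁ • T + y₂ • N + y₃ • B) ⨯₃ (z₁ • T + z₂ • N + z₃ • B)) =
      (x₁ * (y₂ * z₃ - y₃ * z₂) - x₂ * (y₁ * z₃ - y₃ * z₁) + x₃ * (y₁ * z₂ - y₂ * z₁))
        * (T ⬝ᵥ (N ⨯₃ B)) := by
  simp [cross_apply, dotProduct, Fin.sum_univ_three]
  ring

lemma dot_combo' (T N B : Fin 3 → ℝ)
    (hTT : T ⬝ᵥ T = 1) (hNN : N ⬝ᵥ N = 1) (hBB : B ⬝ᵥ B = 1)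
    (hTN : T ⬝ᵥ N = 0) (hTB : T ⬝ᵥ B = 0) (hNB : N ⬝ᵥ B = 0)
    (x₁ x₂ x₃ y₁ y₂ y₃ : ℝ) :
    (x₁ • T + x₂ • N + x₃ • B) ⬝ᵥ (y₁ • T + y₂ • N + y₃ • B) =
      x₁ * y₁ + x₂ * y₂ + x₃ * y₃ := by
  simp only [dotProduct, Fin.sum_univ_three, Pi.add_apply, Pi.smul_apply, smul_eq_mul] at *
  linear_combination x₁*y₁*hTT + x₂*y₂*hNN + x₃*y₃*hBB + (x₁*y₂+x₂*y₁)*hTN + (x₁*y₃+x₃*y₁)*hTB + (x₂*y₃+x₃*y₂)*hNB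


theorem stmt_10
    (α T N B : ℝ → Fin 3 → ℝ) (κ τ a₁ a₂ : ℝ → ℝ)
    (hαs : ContDiff ℝ (⊤ : ℕ∞) α) (hTs : ContDiff ℝ (⊤ : ℕ∞) T) (hNs : ContDiff ℝ (⊤ : ℕ∞) N)
    (hBs : ContDiff ℝ (⊤ : ℕ∞) B) (hκs : ContDiff ℝ (⊤ : ℕ∞) κ) (hτs : ContDiff ℝ (⊤ : ℕ∞) τ)
    (ha₁s : ContDiff ℝ (⊤ : ℕ∞) a₁) (ha₂s : ContDiff ℝ (⊤ : ℕ∞) a₂)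
    (hαT : ∀ s, T s = deriv α s)
    (hTT : ∀ s, T s ⬝ᵥ T s = 1) (hNN : ∀ s, N s ⬝ᵥ N s = 1) (hBB : ∀ s, B s ⬝ᵥ B s = 1)
    (hTN : ∀ s, T s ⬝ᵥ N s = 0) (hTB : ∀ s, T s ⬝ᵥ B s = 0) (hNB : ∀ s, N s ⬝ᵥ B s = 0)
    (hBTN : ∀ s, B s = T s ⨯₃ N s)
    (hT' : ∀ s, deriv T s = κ s • N s)
    (hN' : ∀ s, deriv N s = (-κ s) • T s + τ s • B s)
    (hB' : ∀ s, deriv B s = (-τ s) • N s)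
    (hcircle : ∀ s, a₁ s ^ 2 + a₂ s ^ 2 = 1)
    (q_n : ℝ → Fin 3 → ℝ) (hq : ∀ s, q_n s = a₁ s • N s + a₂ s • B s)
    (F : ℝ → ℝ → Fin 3 → ℝ) (hF : ∀ s u, F s u = α s + u • q_n s)
    (f : ℝ → ℝ) (hf : ∀ s, f s = deriv a₁ s * a₂ s - a₁ s * deriv a₂ s - τ s)
    (g : ℝ → ℝ → ℝ) (hg : ∀ s u, g s u = 1 - u * a₁ s * κ s)
    (U : ℝ → ℝ → Fin 3 → ℝ)
    (hU : ∀ s u, U s u = (Real.sqrt ((deriv (fun t => F t u) s ⨯₃ deriv (F s) u) ⬝ᵥ (deriv (fun t => F t u) s ⨯₃ deriv (F s) u)))⁻¹ • (deriv (fun t => F t u) s ⨯₃ deriv (F s) u))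
    (EE FF₁ GG LL MM NN₂ : ℝ → ℝ → ℝ)
    (hEE : ∀ s u, EE s u = deriv (fun t => F t u) s ⬝ᵥ deriv (fun t => F t u) s)
    (hFF₁ : ∀ s u, FF₁ s u = deriv (fun t => F t u) s ⬝ᵥ deriv (F s) u)
    (hGG : ∀ s u, GG s u = deriv (F s) u ⬝ᵥ deriv (F s) u)
    (hLL : ∀ s u, LL s u = deriv (fun t => deriv (fun t' => F t' u) t) s ⬝ᵥ U s u)
    (hMM : ∀ s u, MM s u = deriv (fun t => deriv (F t) u) s ⬝ᵥ U s u)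
    (hNN₂ : ∀ s u, NN₂ s u = deriv (deriv (F s)) u ⬝ᵥ U s u)
    (KK : ℝ → ℝ → ℝ)
    (hKK : ∀ s u, KK s u = (LL s u * NN₂ s u - MM s u ^ 2) / (EE s u * GG s u - FF₁ s u ^ 2)) :
    (∀ s u, u ^ 2 * f s ^ 2 + g s u ^ 2 ≠ 0 →
        KK s u = -(f s ^ 2) / ((u ^ 2 * f s ^ 2 + g s u ^ 2)
          * (g s u ^ 2 + u ^ 2 * ((deriv a₁ s - a₂ s * τ s) ^ 2 + (a₁ s * τ s + deriv a₂ s) ^ 2))))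
      ∧ ((∀ s u, u ^ 2 * f s ^ 2 + g s u ^ 2 ≠ 0 → KK s u = 0) ↔ (∀ s, f s = 0))
      ∧ ((∀ s, f s = 0) ↔ (∀ s, deriv α s ⬝ᵥ (q_n s ⨯₃ deriv q_n s) = 0)) := by
  classical
  -- basic differentiability facts
  have hda₁ : ∀ s, HasDerivAt a₁ (deriv a₁ s) s := fun s =>
    (ha₁s.differentiable (by simp) s).hasDerivAt
  have hda₂ : ∀ s, HasDerivAt a₂ (deriv a₂ s) s := fun s =>
    (ha₂s.differentiable (by simp) s).hasDerivAt
  have hdN : ∀ s, HasDerivAt N (deriv N s) s := fun s =>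
    (hNs.differentiable (by simp) s).hasDerivAt
  have hdB : ∀ s, HasDerivAt B (deriv B s) s := fun s =>
    (hBs.differentiable (by simp) s).hasDerivAt
  -- derivative of q_n
  have hqd : ∀ s, HasDerivAt q_n
      ((-(a₁ s * κ s)) • T s + (deriv a₁ s - a₂ s * τ s) • N s
        + (a₁ s * τ s + deriv a₂ s) • B s) s := by
    intro s
    have h2 : q_n = fun t => a₁ t • N t + a₂ t • B t := funext hq
    rw [h2]
    have h1 : HasDerivAt (fun t => a₁ t • N t + a₂ t • B t)
        ((a₁ s • deriv N s + deriv a₁ s • N s) + (a₂ s • deriv B s + deriv a₂ s • B s)) s :=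
      ((hda₁ s).smul (hdN s)).add ((hda₂ s).smul (hdB s))
    convert h1 using 1
    rw [hN' s, hB' s]
    module
  -- ∂F/∂s
  have hFs : ∀ s u, deriv (fun t => F t u) s =
      g s u • T s + (u * (deriv a₁ s - a₂ s * τ s)) • N s
        + (u * (a₁ s * τ s + deriv a₂ s)) • B s := by
    intro s u
    have h2 : (fun t => F t u) = fun t => α t + u • q_n t := funext fun t => hF t u
    have hα' : HasDerivAt α (T s) s := by
      rw [hαT s]; exact (hαs.differentiable (by simp) s).hasDerivAt
    have h3 := hα'.add ((hqd s).const_smul u)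
    rw [h2, show (fun t => α t + u • q_n t) = α + u • q_n from rfl, h3.deriv, hg]
    module
  -- ∂F/∂u
  have hFu : ∀ s u, deriv (F s) u = q_n s := by
    intro s u
    have h2 : F s = fun v => α s + v • q_n s := funext fun v => hF s v
    rw [h2]
    have h3 : HasDerivAt (fun v : ℝ => α s + v • q_n s) (q_n s) u := by
      have := HasDerivAt.const_add (α s) ((hasDerivAt_id u).smul_const (q_n s))
      simpa using this
    exact h3.deriv
  have hFuu : ∀ s u, deriv (deriv (F s)) u = 0 := by
    intro s u
    have h2 : deriv (F s) = fun _ => q_n s := funext fun v => hFu s v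
    rw [h2, deriv_const]
  have hFsu : ∀ s u, deriv (fun t => deriv (F t) u) s = deriv q_n s := by
    intro s u
    have h2 : (fun t => deriv (F t) u) = q_n := funext fun t => hFu t u
    rw [h2]
  -- a₁ a₁' + a₂ a₂' = 0
  have h0 : ∀ s, a₁ s * deriv a₁ s + a₂ s * deriv a₂ s = 0 := by
    intro s
    have h1 : HasDerivAt (fun t => a₁ t ^ 2 + a₂ t ^ 2)
        (2 * a₁ s * deriv a₁ s + 2 * a₂ s * deriv a₂ s) s := by
      have := ((hda₁ s).fun_pow 2).fun_add ((hda₂ s).fun_pow 2)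
      refine this.congr_deriv ?_
      push_cast
      ring
    have h2 : (fun t => a₁ t ^ 2 + a₂ t ^ 2) = fun _ => (1 : ℝ) := funext hcircle
    rw [h2] at h1
    have h3 := h1.unique (hasDerivAt_const s 1)
    linarith
  -- T ⬝ (N × B) = 1
  have hT_NB : ∀ s, T s ⬝ᵥ (N s ⨯₃ B s) = 1 := by
    intro s
    rw [triple_product_permutation, triple_product_permutation, ← hBTN s]
    exact hBB s
  -- combo forms
  have hqc : ∀ s, q_n s = (0 : ℝ) • T s + a₁ s • N s + a₂ s • B s := by
    intro s; rw [hq s]; module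
  -- Part 1
  have key : ∀ s u, u ^ 2 * f s ^ 2 + g s u ^ 2 ≠ 0 →
      KK s u = -(f s ^ 2) / ((u ^ 2 * f s ^ 2 + g s u ^ 2)
        * (g s u ^ 2 + u ^ 2 * ((deriv a₁ s - a₂ s * τ s) ^ 2
            + (a₁ s * τ s + deriv a₂ s) ^ 2))) := by
    intro s u _hreg
    have dot := dot_combo' (T s) (N s) (B s) (hTT s) (hNN s) (hBB s) (hTN s) (hTB s) (hNB s)
    have trip := triple_combo' (T s) (N s) (B s)
    have eFs := hFs s u
    have eFu : deriv (F s) u = (0 : ℝ) • T s + a₁ s • N s + a₂ s • B s := by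
      rw [hFu s u, hqc s]
    have hXX : (deriv (fun t => F t u) s ⨯₃ deriv (F s) u) ⬝ᵥ
        (deriv (fun t => F t u) s ⨯₃ deriv (F s) u) = u ^ 2 * f s ^ 2 + g s u ^ 2 := by
      rw [cross_dot_cross, eFs, eFu]
      simp only [dot]
      rw [hf s, hg s u]
      linear_combination ((1 - u * a₁ s * κ s) ^ 2 - u ^ 2 * τ s *
        ((deriv a₁ s - a₂ s * τ s) * a₂ s - (a₁ s * τ s + deriv a₂ s) * a₁ s
          + (deriv a₁ s * a₂ s - a₁ s * deriv a₂ s - τ s))) * hcircle s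
    have hXnn : (0 : ℝ) ≤ u ^ 2 * f s ^ 2 + g s u ^ 2 := by positivity
    have hE : EE s u = g s u ^ 2 + u ^ 2 * ((deriv a₁ s - a₂ s * τ s) ^ 2
        + (a₁ s * τ s + deriv a₂ s) ^ 2) := by
      rw [hEE s u, eFs, dot]; ring
    have hG : GG s u = 1 := by
      rw [hGG s u, eFu, dot]
      linear_combination hcircle s
    have hF1 : FF₁ s u = 0 := by
      rw [hFF₁ s u, eFs, eFu, dot]
      linear_combination u * h0 s
    have hNval : NN₂ s u = 0 := by
      rw [hNN₂ s u, hFuu s u, zero_dotProduct]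
    have hMMval : MM s u = (Real.sqrt (u ^ 2 * f s ^ 2 + g s u ^ 2))⁻¹ * (-(f s)) := by
      rw [hMM s u, hU s u, hXX, dotProduct_smul, smul_eq_mul]
      congr 1
      rw [hFsu s u, (hqd s).deriv, eFs, eFu, trip, hT_NB s, mul_one, hf s, hg s u]
      linear_combination (τ s) * hcircle s
    rw [hKK s u, hNval, hMMval, hE, hG, hF1, mul_zero, zero_sub, mul_one]
    have h1 : ((Real.sqrt (u ^ 2 * f s ^ 2 + g s u ^ 2))⁻¹ * (-(f s))) ^ 2
        = f s ^ 2 / (u ^ 2 * f s ^ 2 + g s u ^ 2) := by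
      rw [mul_pow, inv_pow, Real.sq_sqrt hXnn, neg_sq, inv_mul_eq_div]
    rw [h1]
    rw [neg_div, div_div]
    norm_num [neg_div]
  refine ⟨key, ?_, ?_⟩
  · constructor
    · intro h s
      have hg0 : g s 0 = 1 := by rw [hg]; ring
      have hreg0 : (0 : ℝ) ^ 2 * f s ^ 2 + g s 0 ^ 2 ≠ 0 := by
        rw [hg0]; norm_num
      have h1 := key s 0 hreg0
      rw [h s 0 hreg0, hg0] at h1
      norm_num at h1
      nlinarith [sq_nonneg (f s), h1]
    · intro h s u hreg
      rw [key s u hreg, h s]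
      norm_num
  · have hval : ∀ s, deriv α s ⬝ᵥ (q_n s ⨯₃ deriv q_n s) = -(f s) := by
      intro s
      have trip := triple_combo' (T s) (N s) (B s)
      rw [← hαT s, (hqd s).deriv, hqc s]
      nth_rewrite 1 [show T s = (1 : ℝ) • T s + (0 : ℝ) • N s + (0 : ℝ) • B s by module]
      rw [trip, hT_NB s, mul_one, hf s]
      linear_combination (τ s) * hcircle s
    constructor
    · intro h s; rw [hval s, h s, neg_zero]
    · intro h s
      have := h s
      rw [hval s] at this
      exact neg_eq_zero.mp this
end

section
/- Let (s,u) be a regular point of the GNR-surface F, i.e. u²·f(s)² + g(s,u)² ≠ 0. Then the Gaussian curvature K = (L·N₂ − M²)/(E·G − F₁²) and the mean curvature H = (E·N₂ − 2F₁·M + G·L)/(2(E·G − F₁²)) of F satisfy the relation K·L + 2·H·M² = 0. -/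
open Matrix
open scoped Matrix

theorem stmt_11
    (α T N B : ℝ → Fin 3 → ℝ) (κ τ a₁ a₂ : ℝ → ℝ)
    (hαs : ContDiff ℝ (⊤ : ℕ∞) α) (hTs : ContDiff ℝ (⊤ : ℕ∞) T) (hNs : ContDiff ℝ (⊤ : ℕ∞) N)
    (hBs : ContDiff ℝ (⊤ : ℕ∞) B) (hκs : ContDiff ℝ (⊤ : ℕ∞) κ) (hτs : ContDiff ℝ (⊤ : ℕ∞) τ)
    (ha₁s : ContDiff ℝ (⊤ : ℕ∞) a₁) (ha₂s : ContDiff ℝ (⊤ : ℕ∞) a₂)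
    (hαT : ∀ s, T s = deriv α s)
    (hTT : ∀ s, T s ⬝ᵥ T s = 1) (hNN : ∀ s, N s ⬝ᵥ N s = 1) (hBB : ∀ s, B s ⬝ᵥ B s = 1)
    (hTN : ∀ s, T s ⬝ᵥ N s = 0) (hTB : ∀ s, T s ⬝ᵥ B s = 0) (hNB : ∀ s, N s ⬝ᵥ B s = 0)
    (hBTN : ∀ s, B s = T s ⨯₃ N s)
    (hT' : ∀ s, deriv T s = κ s • N s)
    (hN' : ∀ s, deriv N s = (-κ s) • T s + τ s • B s)
    (hB' : ∀ s, deriv B s = (-τ s) • N s)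
    (hcircle : ∀ s, a₁ s ^ 2 + a₂ s ^ 2 = 1)
    (q_n : ℝ → Fin 3 → ℝ) (hq : ∀ s, q_n s = a₁ s • N s + a₂ s • B s)
    (F : ℝ → ℝ → Fin 3 → ℝ) (hF : ∀ s u, F s u = α s + u • q_n s)
    (f : ℝ → ℝ) (hf : ∀ s, f s = deriv a₁ s * a₂ s - a₁ s * deriv a₂ s - τ s)
    (g : ℝ → ℝ → ℝ) (hg : ∀ s u, g s u = 1 - u * a₁ s * κ s)
    (U : ℝ → ℝ → Fin 3 → ℝ)
    (hU : ∀ s u, U s u = (Real.sqrt ((deriv (fun t => F t u) s ⨯₃ deriv (F s) u) ⬝ᵥ (deriv (fun t => F t u) s ⨯₃ deriv (F s) u)))⁻¹ • (deriv (fun t => F t u) s ⨯₃ deriv (F s) u))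
    (EE FF₁ GG LL MM NN₂ : ℝ → ℝ → ℝ)
    (hEE : ∀ s u, EE s u = deriv (fun t => F t u) s ⬝ᵥ deriv (fun t => F t u) s)
    (hFF₁ : ∀ s u, FF₁ s u = deriv (fun t => F t u) s ⬝ᵥ deriv (F s) u)
    (hGG : ∀ s u, GG s u = deriv (F s) u ⬝ᵥ deriv (F s) u)
    (hLL : ∀ s u, LL s u = deriv (fun t => deriv (fun t' => F t' u) t) s ⬝ᵥ U s u)
    (hMM : ∀ s u, MM s u = deriv (fun t => deriv (F t) u) s ⬝ᵥ U s u)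
    (hNN₂ : ∀ s u, NN₂ s u = deriv (deriv (F s)) u ⬝ᵥ U s u)
    (KK : ℝ → ℝ → ℝ)
    (hKK : ∀ s u, KK s u = (LL s u * NN₂ s u - MM s u ^ 2) / (EE s u * GG s u - FF₁ s u ^ 2))
    (HH : ℝ → ℝ → ℝ)
    (hHH : ∀ s u, HH s u = (EE s u * NN₂ s u - 2 * FF₁ s u * MM s u + GG s u * LL s u)
        / (2 * (EE s u * GG s u - FF₁ s u ^ 2)))
    (s u : ℝ) (hreg : u ^ 2 * f s ^ 2 + g s u ^ 2 ≠ 0) :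
    KK s u * LL s u + 2 * HH s u * MM s u ^ 2 = 0 := by

  -- q_n as a function
  have hqfun : q_n = fun t => a₁ t • N t + a₂ t • B t := funext hq
  -- F s as a function of u
  have hFsfun : F s = fun v => α s + v • q_n s := funext (hF s)
  -- derivative of F s in u is the constant q_n s
  have hFs' : ∀ v : ℝ, HasDerivAt (F s) (q_n s) v := by
    intro v
    rw [hFsfun]
    have h1 : HasDerivAt (fun v : ℝ => v • q_n s) ((1:ℝ) • q_n s) v :=
      (hasDerivAt_id v).smul_const (q_n s)
    simpa using h1.const_add (α s)
  have hDFs : deriv (F s) = fun _ => q_n s := funext fun v => (hFs' v).deriv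
  -- NN₂ = 0
  have hN2 : NN₂ s u = 0 := by
    rw [hNN₂, hDFs]
    simp
  -- derivative of q_n
  have dN := hNs.differentiable (by simp)
  have dB := hBs.differentiable (by simp)
  have da₁ := ha₁s.differentiable (by simp)
  have da₂ := ha₂s.differentiable (by simp)
  have hqn' : HasDerivAt q_n
      ((a₁ s • deriv N s + deriv a₁ s • N s) + (a₂ s • deriv B s + deriv a₂ s • B s)) s := by
    rw [hqfun]
    exact ((da₁ s).hasDerivAt.smul (dN s).hasDerivAt).add
      ((da₂ s).hasDerivAt.smul (dB s).hasDerivAt)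
  -- derivative of fun t => F t u
  have hFu' : HasDerivAt (fun t => F t u)
      (deriv α s + u • ((a₁ s • deriv N s + deriv a₁ s • N s) + (a₂ s • deriv B s + deriv a₂ s • B s))) s := by
    have : (fun t => F t u) = fun t => α t + u • q_n t := funext fun t => hF t u
    rw [this]
    exact ((hαs.differentiable (by simp)) s).hasDerivAt.add (hqn'.const_smul u)
  -- circle derivative: a₁ a₁' + a₂ a₂' = 0
  have hcirc' : a₁ s * deriv a₁ s + a₂ s * deriv a₂ s = 0 := by
    have h1 : HasDerivAt (fun t => a₁ t ^ 2 + a₂ t ^ 2)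
        (2 * a₁ s * deriv a₁ s + 2 * a₂ s * deriv a₂ s) s := by
      have ha : HasDerivAt (fun t => a₁ t ^ 2) (2 * a₁ s * deriv a₁ s) s := by
        simpa [mul_comm, mul_assoc, mul_left_comm] using ((da₁ s).hasDerivAt).fun_pow 2
      have hb : HasDerivAt (fun t => a₂ t ^ 2) (2 * a₂ s * deriv a₂ s) s := by
        simpa [mul_comm, mul_assoc, mul_left_comm] using ((da₂ s).hasDerivAt).fun_pow 2
      exact ha.add hb
    have h2 : (fun t => a₁ t ^ 2 + a₂ t ^ 2) = fun _ => (1:ℝ) := funext hcircle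
    have h3 := h1
    rw [h2] at h3
    have h4 := h3.unique (hasDerivAt_const s (1:ℝ))
    linarith
  -- GG = 1
  have hG1 : GG s u = 1 := by
    rw [hGG, hDFs]
    simp only [hq, dotProduct_add, add_dotProduct, dotProduct_smul, smul_dotProduct,
      smul_eq_mul]
    rw [dotProduct_comm (B s) (N s)]
    rw [hNN, hBB, hNB]
    have := hcircle s
    nlinarith [hcircle s]
  -- FF₁ = 0
  have hF10 : FF₁ s u = 0 := by
    rw [hFF₁, hDFs, hFu'.deriv]
    simp only [hq, hN', hB', ← hαT]
    simp only [dotProduct_add, add_dotProduct, dotProduct_smul, smul_dotProduct,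
      smul_eq_mul, smul_add, add_dotProduct]
    rw [dotProduct_comm (B s) (N s)]
    rw [hNN, hBB, hTN, hTB, hNB]
    linear_combination u * hcirc'
  -- final algebra
  rw [hKK, hHH, hN2, hG1, hF10]
  by_cases hE : EE s u = 0
  · simp [hE]
  · field_simp
    ring
end

section
/- Suppose the GNR-surface F is developable, i.e. f(s) = 0 for all s. Then for all s: a₁′(s) = a₂(s)·τ(s) and a₂′(s) = −a₁(s)·τ(s). Consequently the base curve α is a line of curvature of F, i.e. deriv α s × deriv U_α s = 0 for all s. -/
open Matrix
open scoped Matrix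

theorem stmt_14
    (α T N B : ℝ → Fin 3 → ℝ) (κ τ a₁ a₂ : ℝ → ℝ)
    (hαs : ContDiff ℝ (⊤ : ℕ∞) α) (hTs : ContDiff ℝ (⊤ : ℕ∞) T) (hNs : ContDiff ℝ (⊤ : ℕ∞) N)
    (hBs : ContDiff ℝ (⊤ : ℕ∞) B) (hκs : ContDiff ℝ (⊤ : ℕ∞) κ) (hτs : ContDiff ℝ (⊤ : ℕ∞) τ)
    (ha₁s : ContDiff ℝ (⊤ : ℕ∞) a₁) (ha₂s : ContDiff ℝ (⊤ : ℕ∞) a₂)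
    (hαT : ∀ s, T s = deriv α s)
    (hTT : ∀ s, T s ⬝ᵥ T s = 1) (hNN : ∀ s, N s ⬝ᵥ N s = 1) (hBB : ∀ s, B s ⬝ᵥ B s = 1)
    (hTN : ∀ s, T s ⬝ᵥ N s = 0) (hTB : ∀ s, T s ⬝ᵥ B s = 0) (hNB : ∀ s, N s ⬝ᵥ B s = 0)
    (hBTN : ∀ s, B s = T s ⨯₃ N s)
    (hT' : ∀ s, deriv T s = κ s • N s)
    (hN' : ∀ s, deriv N s = (-κ s) • T s + τ s • B s)
    (hB' : ∀ s, deriv B s = (-τ s) • N s)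
    (hcircle : ∀ s, a₁ s ^ 2 + a₂ s ^ 2 = 1)
    (q_n : ℝ → Fin 3 → ℝ) (hq : ∀ s, q_n s = a₁ s • N s + a₂ s • B s)
    (F : ℝ → ℝ → Fin 3 → ℝ) (hF : ∀ s u, F s u = α s + u • q_n s)
    (f : ℝ → ℝ) (hf : ∀ s, f s = deriv a₁ s * a₂ s - a₁ s * deriv a₂ s - τ s)
    (Uα : ℝ → Fin 3 → ℝ) (hUα : ∀ s, Uα s = (-a₂ s) • N s + a₁ s • B s)
    (hf0 : ∀ s, f s = 0) :
    (∀ s, deriv a₁ s = a₂ s * τ s ∧ deriv a₂ s = -(a₁ s * τ s))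
      ∧ ∀ s, deriv α s ⨯₃ deriv Uα s = 0 := by
  have hd1 : ∀ s, DifferentiableAt ℝ a₁ s := fun s =>
    (ha₁s.differentiable (by simp)).differentiableAt
  have hd2 : ∀ s, DifferentiableAt ℝ a₂ s := fun s =>
    (ha₂s.differentiable (by simp)).differentiableAt
  have hdN : ∀ s, DifferentiableAt ℝ N s := fun s =>
    (hNs.differentiable (by simp)).differentiableAt
  have hdB : ∀ s, DifferentiableAt ℝ B s := fun s =>
    (hBs.differentiable (by simp)).differentiableAt
  -- derivative of circle condition
  have hcirc' : ∀ s, a₁ s * deriv a₁ s + a₂ s * deriv a₂ s = 0 := by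
    intro s
    have h0 : deriv (fun s => a₁ s ^ 2 + a₂ s ^ 2) s = 0 := by
      have : (fun s => a₁ s ^ 2 + a₂ s ^ 2) = fun _ => (1 : ℝ) := funext hcircle
      rw [this, deriv_const]
    rw [deriv_fun_add (((hd1 s).fun_pow 2)) (((hd2 s).fun_pow 2)),
      deriv_fun_pow (hd1 s) 2, deriv_fun_pow (hd2 s) 2] at h0
    push_cast at h0
    nlinarith [h0]
  have key : ∀ s, deriv a₁ s = a₂ s * τ s ∧ deriv a₂ s = -(a₁ s * τ s) := by
    intro s
    have h1 := hf0 s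
    rw [hf s] at h1
    have h2 := hcirc' s
    have h3 := hcircle s
    refine ⟨?_, ?_⟩
    · linear_combination a₂ s * h1 + a₁ s * h2 - deriv a₁ s * h3
    · linear_combination -a₁ s * h1 + a₂ s * h2 - deriv a₂ s * h3
  refine ⟨key, fun s => ?_⟩
  have hU' : deriv Uα s = (a₂ s * κ s) • T s := by
    have hUe : Uα = fun s => (-a₂ s) • N s + a₁ s • B s := funext hUα
    rw [hUe]
    rw [deriv_fun_add (((hd2 s).fun_neg).fun_smul (hdN s)) ((hd1 s).fun_smul (hdB s)),
      deriv_fun_smul ((hd2 s).fun_neg) (hdN s), deriv_fun_smul (hd1 s) (hdB s),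
      hN' s, hB' s, deriv.fun_neg]
    obtain ⟨e1, e2⟩ := key s
    rw [e1, e2]
    ext i
    simp [Pi.add_apply, Pi.smul_apply, smul_eq_mul]
    ring
  rw [hU', ← hαT s]
  rw [LinearMap.map_smul, cross_self, smul_zero]
end

section
/- Suppose the GNR-surface F is developable, i.e. f(s) = 0 for all s. Then for every s, deriv U_α s = (a₂(s)·κ(s)) • T(s); equivalently, the Weingarten (shape) operator of F sends ∂F/∂s to −(a₂(s)κ(s)/g(s,u)) • ∂F/∂s whenever g(s,u) ≠ 0, and sends ∂F/∂u to 0. -/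
open Matrix
open scoped Matrix

theorem stmt_15
    (α T N B : ℝ → Fin 3 → ℝ) (κ τ a₁ a₂ : ℝ → ℝ)
    (hαs : ContDiff ℝ (⊤ : ℕ∞) α) (hTs : ContDiff ℝ (⊤ : ℕ∞) T) (hNs : ContDiff ℝ (⊤ : ℕ∞) N)
    (hBs : ContDiff ℝ (⊤ : ℕ∞) B) (hκs : ContDiff ℝ (⊤ : ℕ∞) κ) (hτs : ContDiff ℝ (⊤ : ℕ∞) τ)
    (ha₁s : ContDiff ℝ (⊤ : ℕ∞) a₁) (ha₂s : ContDiff ℝ (⊤ : ℕ∞) a₂)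
    (hαT : ∀ s, T s = deriv α s)
    (hTT : ∀ s, T s ⬝ᵥ T s = 1) (hNN : ∀ s, N s ⬝ᵥ N s = 1) (hBB : ∀ s, B s ⬝ᵥ B s = 1)
    (hTN : ∀ s, T s ⬝ᵥ N s = 0) (hTB : ∀ s, T s ⬝ᵥ B s = 0) (hNB : ∀ s, N s ⬝ᵥ B s = 0)
    (hBTN : ∀ s, B s = T s ⨯₃ N s)
    (hT' : ∀ s, deriv T s = κ s • N s)
    (hN' : ∀ s, deriv N s = (-κ s) • T s + τ s • B s)
    (hB' : ∀ s, deriv B s = (-τ s) • N s)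
    (hcircle : ∀ s, a₁ s ^ 2 + a₂ s ^ 2 = 1)
    (q_n : ℝ → Fin 3 → ℝ) (hq : ∀ s, q_n s = a₁ s • N s + a₂ s • B s)
    (F : ℝ → ℝ → Fin 3 → ℝ) (hF : ∀ s u, F s u = α s + u • q_n s)
    (f : ℝ → ℝ) (hf : ∀ s, f s = deriv a₁ s * a₂ s - a₁ s * deriv a₂ s - τ s)
    (g : ℝ → ℝ → ℝ) (hg : ∀ s u, g s u = 1 - u * a₁ s * κ s)
    (Uα : ℝ → Fin 3 → ℝ) (hUα : ∀ s, Uα s = (-a₂ s) • N s + a₁ s • B s)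
    (hf0 : ∀ s, f s = 0) :
    (∀ s, deriv Uα s = (a₂ s * κ s) • T s)
      ∧ (∀ s u, g s u ≠ 0 →
          -deriv Uα s = (-(a₂ s * κ s / g s u)) • deriv (fun t => F t u) s)
      ∧ ∀ s u, -deriv (fun _ : ℝ => Uα s) u = 0 := by
  have hN := hNs.differentiable (by simp)
  have hB := hBs.differentiable (by simp)
  have hα := hαs.differentiable (by simp)
  have h1 := ha₁s.differentiable (by simp)
  have h2 := ha₂s.differentiable (by simp)
  -- derivative of the circle constraint
  have hkey : ∀ s, a₁ s * deriv a₁ s + a₂ s * deriv a₂ s = 0 := by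
    intro s
    have hc : (fun t => a₁ t ^ 2 + a₂ t ^ 2) = fun _ => (1:ℝ) := funext hcircle
    have hd : deriv (fun t => a₁ t ^ 2 + a₂ t ^ 2) s = 0 := by rw [hc]; simp
    have e1 : deriv (fun t => a₁ t ^ 2 + a₂ t ^ 2) s
        = 2 * a₁ s * deriv a₁ s + 2 * a₂ s * deriv a₂ s := by
      rw [deriv_fun_add ((h1 s).fun_pow 2) ((h2 s).fun_pow 2),
        deriv_fun_pow (h1 s) 2, deriv_fun_pow (h2 s) 2]
      ring
    rw [e1] at hd
    linarith
  have hτ : ∀ s, τ s = deriv a₁ s * a₂ s - a₁ s * deriv a₂ s := by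
    intro s; have := hf0 s; rw [hf] at this; linarith
  have key1 : ∀ s, a₁ s * τ s + deriv a₂ s = 0 := by
    intro s; rw [hτ s]
    linear_combination a₂ s * hkey s - deriv a₂ s * hcircle s
  have key2 : ∀ s, deriv a₁ s - a₂ s * τ s = 0 := by
    intro s; rw [hτ s]
    linear_combination a₁ s * hkey s - deriv a₁ s * hcircle s
  have hUd : ∀ s, deriv Uα s = (a₂ s * κ s) • T s := by
    intro s
    have hUeq : Uα = fun t => (-a₂ t) • N t + a₁ t • B t := funext hUα
    rw [hUeq, deriv_fun_add (((h2 s).fun_neg).fun_smul (hN s)) ((h1 s).fun_smul (hB s)),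
      deriv_fun_smul (h2 s).fun_neg (hN s), deriv_fun_smul (h1 s) (hB s),
      hN' s, hB' s, deriv.fun_neg]
    funext i
    simp only [Pi.add_apply, Pi.smul_apply, Pi.neg_apply, smul_eq_mul]
    linear_combination B s i * key2 s - N s i * key1 s
  refine ⟨hUd, ?_, ?_⟩
  · intro s u hgne
    have hFd : deriv (fun t => F t u) s = g s u • T s := by
      have hFe : (fun t => F t u) = fun t => α t + u • (a₁ t • N t + a₂ t • B t) := by
        funext t; rw [hF t u, hq t]
      have hqd : DifferentiableAt ℝ (fun t => a₁ t • N t + a₂ t • B t) s :=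
        ((h1 s).smul (hN s)).add ((h2 s).smul (hB s))
      rw [hFe, deriv_fun_add (hα s) (hqd.fun_const_smul u),
        deriv_fun_const_smul u hqd,
        deriv_fun_add ((h1 s).fun_smul (hN s)) ((h2 s).fun_smul (hB s)),
        deriv_fun_smul (h1 s) (hN s), deriv_fun_smul (h2 s) (hB s),
        hN' s, hB' s, ← hαT s, hg]
      funext i
      simp only [Pi.add_apply, Pi.smul_apply, smul_eq_mul]
      linear_combination u * N s i * key2 s + u * B s i * key1 s
    rw [hUd s, hFd, smul_smul, ← neg_smul]
    congr 1
    field_simp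
  · intro s u
    simp
end

section
/- Suppose the GNR-surface F is developable, i.e. f(s) = 0 for all s, and let (s,u) satisfy g(s,u) > 0. Then the Gaussian curvature of F at (s,u) equals 0 and the mean curvature equals H = (E·N₂ − 2F₁·M + G·L)/(2(E·G − F₁²)) = −a₂(s)·κ(s)/(2·g(s,u)). Consequently the principal curvatures at (s,u) are λ₁ = −a₂(s)κ(s)/g(s,u) and λ₂ = 0, and F is minimal at all such points if and only if a₂·κ ≡ 0. -/
open Matrix
open scoped Matrix

theorem stmt_16
    (α T N B : ℝ → Fin 3 → ℝ) (κ τ a₁ a₂ : ℝ → ℝ)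
    (hαs : ContDiff ℝ (⊤ : ℕ∞) α) (hTs : ContDiff ℝ (⊤ : ℕ∞) T) (hNs : ContDiff ℝ (⊤ : ℕ∞) N)
    (hBs : ContDiff ℝ (⊤ : ℕ∞) B) (hκs : ContDiff ℝ (⊤ : ℕ∞) κ) (hτs : ContDiff ℝ (⊤ : ℕ∞) τ)
    (ha₁s : ContDiff ℝ (⊤ : ℕ∞) a₁) (ha₂s : ContDiff ℝ (⊤ : ℕ∞) a₂)
    (hαT : ∀ s, T s = deriv α s)
    (hTT : ∀ s, T s ⬝ᵥ T s = 1) (hNN : ∀ s, N s ⬝ᵥ N s = 1) (hBB : ∀ s, B s ⬝ᵥ B s = 1)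
    (hTN : ∀ s, T s ⬝ᵥ N s = 0) (hTB : ∀ s, T s ⬝ᵥ B s = 0) (hNB : ∀ s, N s ⬝ᵥ B s = 0)
    (hBTN : ∀ s, B s = T s ⨯₃ N s)
    (hT' : ∀ s, deriv T s = κ s • N s)
    (hN' : ∀ s, deriv N s = (-κ s) • T s + τ s • B s)
    (hB' : ∀ s, deriv B s = (-τ s) • N s)
    (hcircle : ∀ s, a₁ s ^ 2 + a₂ s ^ 2 = 1)
    (q_n : ℝ → Fin 3 → ℝ) (hq : ∀ s, q_n s = a₁ s • N s + a₂ s • B s)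
    (F : ℝ → ℝ → Fin 3 → ℝ) (hF : ∀ s u, F s u = α s + u • q_n s)
    (f : ℝ → ℝ) (hf : ∀ s, f s = deriv a₁ s * a₂ s - a₁ s * deriv a₂ s - τ s)
    (g : ℝ → ℝ → ℝ) (hg : ∀ s u, g s u = 1 - u * a₁ s * κ s)
    (U : ℝ → ℝ → Fin 3 → ℝ)
    (hU : ∀ s u, U s u = (Real.sqrt ((deriv (fun t => F t u) s ⨯₃ deriv (F s) u) ⬝ᵥ (deriv (fun t => F t u) s ⨯₃ deriv (F s) u)))⁻¹ • (deriv (fun t => F t u) s ⨯₃ deriv (F s) u))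
    (EE FF₁ GG LL MM NN₂ : ℝ → ℝ → ℝ)
    (hEE : ∀ s u, EE s u = deriv (fun t => F t u) s ⬝ᵥ deriv (fun t => F t u) s)
    (hFF₁ : ∀ s u, FF₁ s u = deriv (fun t => F t u) s ⬝ᵥ deriv (F s) u)
    (hGG : ∀ s u, GG s u = deriv (F s) u ⬝ᵥ deriv (F s) u)
    (hLL : ∀ s u, LL s u = deriv (fun t => deriv (fun t' => F t' u) t) s ⬝ᵥ U s u)
    (hMM : ∀ s u, MM s u = deriv (fun t => deriv (F t) u) s ⬝ᵥ U s u)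
    (hNN₂ : ∀ s u, NN₂ s u = deriv (deriv (F s)) u ⬝ᵥ U s u)
    (KK : ℝ → ℝ → ℝ)
    (hKK : ∀ s u, KK s u = (LL s u * NN₂ s u - MM s u ^ 2) / (EE s u * GG s u - FF₁ s u ^ 2))
    (HH : ℝ → ℝ → ℝ)
    (hHH : ∀ s u, HH s u = (EE s u * NN₂ s u - 2 * FF₁ s u * MM s u + GG s u * LL s u)
        / (2 * (EE s u * GG s u - FF₁ s u ^ 2)))
    (hf0 : ∀ s, f s = 0) :
    (∀ s u, 0 < g s u →
        KK s u = 0 ∧ HH s u = -(a₂ s * κ s) / (2 * g s u)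
          ∧ ∀ x : ℝ, x ^ 2 - 2 * HH s u * x + KK s u = 0 ↔
              (x = -(a₂ s * κ s) / g s u ∨ x = 0))
      ∧ ((∀ s u, 0 < g s u → HH s u = 0) ↔ (∀ s, a₂ s * κ s = 0)) := by

  have dα := hαs.differentiable (by simp)
  have dT := hTs.differentiable (by simp)
  have dN := hNs.differentiable (by simp)
  have dB := hBs.differentiable (by simp)
  have dκ := hκs.differentiable (by simp)
  have da₁ := ha₁s.differentiable (by simp)
  have da₂ := ha₂s.differentiable (by simp)
  -- derivative of the circle constraint
  have hcirc' : ∀ s, a₁ s * deriv a₁ s + a₂ s * deriv a₂ s = 0 := by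
    intro s
    have h1 : HasDerivAt (fun t => a₁ t * a₁ t + a₂ t * a₂ t)
        (deriv a₁ s * a₁ s + a₁ s * deriv a₁ s + (deriv a₂ s * a₂ s + a₂ s * deriv a₂ s)) s :=
      ((da₁ s).hasDerivAt.mul (da₁ s).hasDerivAt).add
        ((da₂ s).hasDerivAt.mul (da₂ s).hasDerivAt)
    have h2 : (fun t => a₁ t * a₁ t + a₂ t * a₂ t) = fun _ => (1:ℝ) :=
      funext fun t => by rw [← hcircle t]; ring
    rw [h2] at h1
    have h3 := h1.unique (hasDerivAt_const s 1)
    linarith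
  have hτ : ∀ s, τ s = deriv a₁ s * a₂ s - a₁ s * deriv a₂ s := by
    intro s
    have := hf0 s
    rw [hf] at this
    linarith
  have hA : ∀ s, deriv a₁ s - a₂ s * τ s = 0 := by
    intro s
    rw [hτ s]
    linear_combination a₁ s * hcirc' s - deriv a₁ s * hcircle s
  have hBc : ∀ s, a₁ s * τ s + deriv a₂ s = 0 := by
    intro s
    rw [hτ s]
    linear_combination a₂ s * hcirc' s - deriv a₂ s * hcircle s
  -- derivative of q_n
  have hq' : ∀ s, HasDerivAt q_n (-(a₁ s * κ s) • T s) s := by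
    intro s
    have hNd : HasDerivAt N ((-κ s) • T s + τ s • B s) s := by
      have := (dN s).hasDerivAt; rwa [hN' s] at this
    have hBd : HasDerivAt B ((-τ s) • N s) s := by
      have := (dB s).hasDerivAt; rwa [hB' s] at this
    have h1 : HasDerivAt (fun t => a₁ t • N t + a₂ t • B t) _ s := ((da₁ s).hasDerivAt.smul hNd).add ((da₂ s).hasDerivAt.smul hBd)
    have he : (fun t => a₁ t • N t + a₂ t • B t) = q_n := funext fun t => (hq t).symm
    rw [he] at h1
    convert h1 using 1
    funext i
    simp only [Pi.add_apply, Pi.smul_apply, Pi.neg_apply, smul_eq_mul, neg_mul]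
    linear_combination (-(N s i)) * hA s + (-(B s i)) * hBc s
  -- derivative of F in s
  have hFsd : ∀ u s, HasDerivAt (fun t => F t u) (g s u • T s) s := by
    intro u s
    have hαd : HasDerivAt α (T s) s := by
      have := (dα s).hasDerivAt; rwa [← hαT s] at this
    have h1 : HasDerivAt (fun t => α t + u • q_n t) _ s := hαd.add ((hq' s).const_smul u)
    have he : (fun t => α t + u • q_n t) = fun t => F t u := funext fun t => (hF t u).symm
    rw [he] at h1
    convert h1 using 1
    funext i
    simp only [hg, Pi.add_apply, Pi.smul_apply, smul_eq_mul]
    ring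
  have hFs' : ∀ u s, deriv (fun t => F t u) s = g s u • T s := fun u s => (hFsd u s).deriv
  -- derivative of F in u
  have hFud : ∀ s u, HasDerivAt (F s) (q_n s) u := by
    intro s u
    have h1 : HasDerivAt (fun v : ℝ => α s + v • q_n s) _ u := (hasDerivAt_const u (α s)).add ((hasDerivAt_id u).smul_const (q_n s))
    simp only [zero_add, one_smul, id_eq] at h1
    have he : (fun v : ℝ => α s + v • q_n s) = F s := funext fun v => (hF s v).symm
    rwa [he] at h1
  have hFu' : ∀ s u, deriv (F s) u = q_n s := fun s u => (hFud s u).deriv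
  -- symmetric dot products
  have hNT : ∀ s, N s ⬝ᵥ T s = 0 := fun s => by rw [dotProduct_comm]; exact hTN s
  have hBT : ∀ s, B s ⬝ᵥ T s = 0 := fun s => by rw [dotProduct_comm]; exact hTB s
  have hBN : ∀ s, B s ⬝ᵥ N s = 0 := fun s => by rw [dotProduct_comm]; exact hNB s
  have hqq : ∀ s, q_n s ⬝ᵥ q_n s = 1 := by
    intro s
    rw [hq]
    simp only [dotProduct_add, add_dotProduct, dotProduct_smul, smul_dotProduct,
      smul_eq_mul, hNN, hBB, hNB, hBN]
    nlinarith [hcircle s]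
  have hTq : ∀ s, T s ⬝ᵥ q_n s = 0 := by
    intro s
    rw [hq]
    simp [dotProduct_add, dotProduct_smul, smul_eq_mul, hTN, hTB]
  have hNTB : ∀ s, N s ⬝ᵥ (T s ⨯₃ B s) = -1 := by
    intro s
    rw [triple_product_permutation, triple_product_permutation,
      show N s ⨯₃ T s = -(T s ⨯₃ N s) from (cross_anticomm _ _).symm, ← hBTN,
      dotProduct_neg, hBB]
  -- key facts per point
  have main : ∀ s u, 0 < g s u → KK s u = 0 ∧ HH s u = -(a₂ s * κ s) / (2 * g s u) := by
    intro s u hgu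
    have hgne : g s u ≠ 0 := ne_of_gt hgu
    set w := deriv (fun t => F t u) s ⨯₃ deriv (F s) u with hw
    have hwv : w = g s u • (a₁ s • B s + a₂ s • (T s ⨯₃ B s)) := by
      rw [hw, hFs' u s, hFu' s u, hq, LinearMap.map_smul₂, map_add,
        LinearMap.map_smul, LinearMap.map_smul, ← hBTN]
    have hww : w ⬝ᵥ w = g s u ^ 2 := by
      rw [hw, hFs' u s, hFu' s u, cross_dot_cross]
      simp only [smul_dotProduct, dotProduct_smul, smul_eq_mul, hTT, hTq, hqq]
      ring
    have hU' : U s u = (g s u)⁻¹ • w := by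
      rw [hU s u, ← hw, hww, Real.sqrt_sq hgu.le]
    have hTTB : T s ⬝ᵥ (T s ⨯₃ B s) = 0 := dot_self_cross _ _
    have hTw : T s ⬝ᵥ w = 0 := by
      rw [hwv]
      simp only [dotProduct_smul, dotProduct_add, smul_eq_mul, hTB, hTTB,
        mul_zero, add_zero, zero_add]
    have hNw : N s ⬝ᵥ w = -(g s u * a₂ s) := by
      rw [hwv]
      simp only [dotProduct_smul, dotProduct_add, smul_eq_mul, hNB, hNTB s]
      ring
    have hE : EE s u = g s u ^ 2 := by
      rw [hEE, hFs' u s]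
      simp only [smul_dotProduct, dotProduct_smul, smul_eq_mul, hTT]
      ring
    have hF1 : FF₁ s u = 0 := by
      rw [hFF₁, hFs' u s, hFu' s u]
      simp [smul_dotProduct, smul_eq_mul, hTq]
    have hG : GG s u = 1 := by
      rw [hGG, hFu' s u]; exact hqq s
    have hN2 : NN₂ s u = 0 := by
      rw [hNN₂]
      have h1 : deriv (F s) = fun _ => q_n s := funext (hFu' s)
      rw [h1]
      simp [zero_dotProduct]
    have hM : MM s u = 0 := by
      rw [hMM]
      have h1 : (fun t => deriv (F t) u) = q_n := funext fun t => hFu' t u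
      rw [h1, (hq' s).deriv, hU']
      simp [dotProduct_smul, smul_dotProduct, smul_eq_mul, hTw]
    have hL : LL s u = -(g s u * (a₂ s * κ s)) := by
      rw [hLL]
      have he : (fun t => deriv (fun t' => F t' u) t) = fun t => g t u • T t :=
        funext fun t => hFs' u t
      rw [he]
      set c : ℝ := -(u * (deriv a₁ s * κ s + a₁ s * deriv κ s)) with hc
      have hgd : HasDerivAt (fun t => g t u) c s := by
        have h1 : HasDerivAt (fun t => 1 - u * a₁ t * κ t) c s := by
          have h2 : HasDerivAt (fun t => u * a₁ t * κ t)
              ((u * deriv a₁ s) * κ s + (u * a₁ s) * deriv κ s) s :=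
            (((da₁ s).hasDerivAt.const_mul u).mul (dκ s).hasDerivAt)
          have h3 : HasDerivAt (fun t => 1 - u * a₁ t * κ t) _ s := (hasDerivAt_const s (1:ℝ)).sub h2
          convert h3 using 1
          rw [hc]; ring
        have he2 : (fun t => 1 - u * a₁ t * κ t) = fun t => g t u :=
          funext fun t => (hg t u).symm
        rwa [he2] at h1
      have hTd : HasDerivAt T (κ s • N s) s := by
        have := (dT s).hasDerivAt; rwa [hT' s] at this
      have h4 : HasDerivAt (fun t => g t u • T t) _ s := hgd.smul hTd
      rw [h4.deriv, hU']
      simp only [dotProduct_smul, add_dotProduct, smul_dotProduct, smul_eq_mul,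
        hNw, hTw, mul_zero, add_zero]
      field_simp
    refine ⟨?_, ?_⟩
    · rw [hKK, hL, hM, hN2, hE, hF1, hG]
      simp
    · rw [hHH, hE, hF1, hG, hL, hM, hN2]
      field_simp
      ring
  constructor
  · intro s u hgu
    obtain ⟨hK0, hHeq⟩ := main s u hgu
    have hgne : g s u ≠ 0 := ne_of_gt hgu
    refine ⟨hK0, hHeq, fun x => ?_⟩
    rw [hK0, hHeq,
      show x ^ 2 - 2 * (-(a₂ s * κ s) / (2 * g s u)) * x + 0
          = x * (x - -(a₂ s * κ s) / g s u) from by field_simp; ring,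
      mul_eq_zero, sub_eq_zero]
    tauto
  · constructor
    · intro h s
      have hg1 : g s 0 = 1 := by rw [hg]; ring
      have hgpos : 0 < g s 0 := by rw [hg1]; norm_num
      have h1 := h s 0 hgpos
      have h2 := (main s 0 hgpos).2
      rw [h1, hg1] at h2
      have h4 : a₂ s * κ s = 0 := by
        field_simp at h2
        linarith
      exact h4
    · intro h s u hgu
      rw [(main s u hgu).2, h s]
      simp
end

section
/- Let θ : ℝ → ℝ be smooth with a₁ = cos θ, a₂ = sin θ, and assume θ′(s) + τ(s) = 0 and κ(s)·cos θ(s) > 0 for all s. Then the central normal of the GNR-surface satisfies h(s) = deriv q_n s / ‖deriv q_n s‖ = −T(s) for all s. Consequently F is an h-slant ruled surface (there exist a unit vector d ∈ ℝ³ and a constant c with ⟨h(s), d⟩ = c for all s) if and only if α is a general helix (there exist a unit vector d ∈ ℝ³ and a constant c with ⟨T(s), d⟩ = c for all s). -/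
open Matrix
open scoped Matrix

theorem stmt_19
    (α T N B : ℝ → Fin 3 → ℝ) (κ τ θ : ℝ → ℝ)
    (hαs : ContDiff ℝ (⊤ : ℕ∞) α) (hTs : ContDiff ℝ (⊤ : ℕ∞) T) (hNs : ContDiff ℝ (⊤ : ℕ∞) N)
    (hBs : ContDiff ℝ (⊤ : ℕ∞) B) (hκs : ContDiff ℝ (⊤ : ℕ∞) κ) (hτs : ContDiff ℝ (⊤ : ℕ∞) τ)
    (hθs : ContDiff ℝ (⊤ : ℕ∞) θ)
    (hαT : ∀ s, T s = deriv α s)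
    (hTT : ∀ s, T s ⬝ᵥ T s = 1) (hNN : ∀ s, N s ⬝ᵥ N s = 1) (hBB : ∀ s, B s ⬝ᵥ B s = 1)
    (hTN : ∀ s, T s ⬝ᵥ N s = 0) (hTB : ∀ s, T s ⬝ᵥ B s = 0) (hNB : ∀ s, N s ⬝ᵥ B s = 0)
    (hBTN : ∀ s, B s = T s ⨯₃ N s)
    (hT' : ∀ s, deriv T s = κ s • N s)
    (hN' : ∀ s, deriv N s = (-κ s) • T s + τ s • B s)
    (hB' : ∀ s, deriv B s = (-τ s) • N s)
    (q_n : ℝ → Fin 3 → ℝ) (hq : ∀ s, q_n s = Real.cos (θ s) • N s + Real.sin (θ s) • B s)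
    (F : ℝ → ℝ → Fin 3 → ℝ) (hF : ∀ s u, F s u = α s + u • q_n s)
    (hzτ : ∀ s, deriv θ s + τ s = 0) (hpos : ∀ s, 0 < κ s * Real.cos (θ s))
    (h : ℝ → Fin 3 → ℝ)
    (hh : ∀ s, h s = (Real.sqrt (deriv q_n s ⬝ᵥ deriv q_n s))⁻¹ • deriv q_n s) :
    (∀ s, h s = -T s)
      ∧ ((∃ d : Fin 3 → ℝ, d ⬝ᵥ d = 1 ∧ ∃ c : ℝ, ∀ s, h s ⬝ᵥ d = c)
          ↔ (∃ d : Fin 3 → ℝ, d ⬝ᵥ d = 1 ∧ ∃ c : ℝ, ∀ s, T s ⬝ᵥ d = c)) := by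

  have hqe : q_n = fun x => Real.cos (θ x) • N x + Real.sin (θ x) • B x := funext hq
  have key : ∀ s, deriv q_n s = (-(κ s * Real.cos (θ s))) • T s := by
    intro s
    have hθd : HasDerivAt θ (deriv θ s) s := (hθs.differentiable (by simp) s).hasDerivAt
    have hNd : HasDerivAt N (deriv N s) s := (hNs.differentiable (by simp) s).hasDerivAt
    have hBd : HasDerivAt B (deriv B s) s := (hBs.differentiable (by simp) s).hasDerivAt
    have h1 : HasDerivAt q_n
        ((Real.cos (θ s) • deriv N s + (-Real.sin (θ s) * deriv θ s) • N s)
          + (Real.sin (θ s) • deriv B s + (Real.cos (θ s) * deriv θ s) • B s)) s := by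
      rw [hqe]
      exact (hθd.cos.smul hNd).add (hθd.sin.smul hBd)
    have hθτ : deriv θ s = -τ s := by linarith [hzτ s]
    rw [h1.deriv, hN' s, hB' s, hθτ]
    module
  have hdot : ∀ s, deriv q_n s ⬝ᵥ deriv q_n s = (κ s * Real.cos (θ s)) ^ 2 := by
    intro s
    rw [key s, smul_dotProduct, dotProduct_smul, hTT s, smul_eq_mul, smul_eq_mul]
    ring
  have hT : ∀ s, h s = -T s := by
    intro s
    rw [hh s, hdot s, Real.sqrt_sq (hpos s).le, key s, smul_smul]
    rw [inv_mul_eq_div, neg_div, div_self (hpos s).ne', neg_one_smul]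
  refine ⟨hT, ?_⟩
  constructor
  · rintro ⟨d, hd, c, hc⟩
    exact ⟨d, hd, -c, fun s => by have := hc s; rw [hT s, neg_dotProduct] at this; linarith⟩
  · rintro ⟨d, hd, c, hc⟩
    exact ⟨d, hd, -c, fun s => by rw [hT s, neg_dotProduct, hc s]⟩
end
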